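/- arXiv:2210.11938 — 6 statements merged into one kernel-verified Lean document; each statement's English description precedes it below -/
import Mathlib

section
/- Let α, β be positive integers, x, y complex with |x|<1, |y|<1, and t₁, t₂ complex numbers avoiding the poles. Then Σ over all pairs (X,Y) with X^α = x, Y^β = y of L(X,Y | t₁, t₂) equals Σ_{m,n>0} αβ x^m y^n / ((mα − t₁)(mα + nβ − t₂)). -/
/-!
Summing over the `α`-th roots `X` of `x` and the `β`-th roots `Y` of `y` commutes with the
absolutely convergent double series defining `genL`, and turns `X ^ m * Y ^ n` into the
power sums of the roots. By orthogonality of the `α`-th roots of unity, the power sum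
`∑ X ^ m` is `α * x ^ (m / α)` when `α ∣ m` and vanishes otherwise, so only the terms with
`m = m' α`, `n = n' β` survive, and reindexing by `(m', n')` gives the right-hand side.
-/

open Polynomial

/-- `L(x,y | t₁,t₂) = Σ_{m,n>0} x^m y^n / ((m−t₁)(m+n−t₂))`. -/
noncomputable def genL (x y t₁ t₂ : ℂ) : ℂ :=
  ∑' p : ℕ × ℕ, x ^ (p.1 + 1) * y ^ (p.2 + 1) /
    ((((p.1 + 1 : ℕ) : ℂ) - t₁) * (((p.1 + p.2 + 2 : ℕ) : ℂ) - t₂))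

open Filter Function Set

theorem Multiset.hasSum_sum_map {ι β α : Type*} [AddCommMonoid α] [TopologicalSpace α]
    [ContinuousAdd α] {s : Multiset ι} {f : ι → β → α} {a : ι → α}
    (h : ∀ i ∈ s, HasSum (f i) (a i)) :
    HasSum (fun b ↦ (s.map fun i ↦ f i b).sum) (s.map a).sum := by
  induction s using Multiset.induction_on with
  | empty => simp [hasSum_zero]
  | cons i s ih =>
    simpa using (h i (s.mem_cons_self i)).add (ih fun j hj ↦ h j (s.mem_cons_of_mem hj))

theorem IsPrimitiveRoot.sum_map_pow_nthRoots {K : Type*} [Field K] {n : ℕ} {ζ z x : K}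
    (hζ : IsPrimitiveRoot ζ n) (hz : z ^ n = x) (m : ℕ) :
    ((nthRoots n x).map (· ^ m)).sum = if n ∣ m then (n : K) * x ^ (m / n) else 0 := by
  have hsum : ((nthRoots n x).map (· ^ m)).sum = z ^ m * ∑ k ∈ Finset.range n, (ζ ^ m) ^ k := by
    rw [hζ.nthRoots_eq hz, Multiset.map_map, Finset.mul_sum]
    exact congrArg Multiset.sum (Multiset.map_congr rfl fun k _ ↦ by simp only [comp_apply]; ring)
  rw [hsum]
  split_ifs with hdvd
  · obtain ⟨c, rfl⟩ := hdvd
    rcases n.eq_zero_or_pos with rfl | hn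
    · simp
    simp only [pow_mul, hζ.pow_eq_one, one_pow, Finset.sum_const, Finset.card_range, hz,
      Nat.mul_div_cancel_left c hn, nsmul_eq_mul, mul_one, mul_comm]
  · rw [geom_sum_eq (fun h ↦ hdvd (hζ.pow_eq_one_iff_dvd m |>.1 h)), pow_right_comm,
      hζ.pow_eq_one, one_pow, sub_self, zero_div, mul_zero]

theorem norm_lt_one_of_mem_nthRoots {K : Type*} [NormedField K] {n : ℕ} {w X : K}
    (hn : 0 < n) (hw : ‖w‖ < 1) (hX : X ∈ nthRoots n w) : ‖X‖ < 1 := by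
  rw [mem_nthRoots hn] at hX
  exact (pow_lt_one_iff_of_nonneg (norm_nonneg X) hn.ne').1 (by rwa [← norm_pow, hX])

theorem bddAbove_range_norm_inv_natCast_sub {𝕜 : Type*} [RCLike 𝕜] (t : 𝕜) :
    BddAbove (range fun m : ℕ ↦ ‖((m : 𝕜) - t)⁻¹‖) := by
  have h : Tendsto (fun m : ℕ ↦ ‖(m : 𝕜) - t‖) atTop atTop :=
    tendsto_atTop_mono (fun m ↦ by simpa using norm_sub_norm_le (m : 𝕜) t)
      (tendsto_atTop_add_const_right _ (-‖t‖) tendsto_natCast_atTop_atTop)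
  simp only [norm_inv]
  exact (tendsto_inv_atTop_zero.comp h).bddAbove_range

theorem summable_genL_term {X Y : ℂ} (hX : ‖X‖ < 1) (hY : ‖Y‖ < 1) (t₁ t₂ : ℂ) :
    Summable fun p : ℕ × ℕ ↦ X ^ (p.1 + 1) * Y ^ (p.2 + 1) /
      ((((p.1 + 1 : ℕ) : ℂ) - t₁) * (((p.1 + p.2 + 2 : ℕ) : ℂ) - t₂)) := by
  obtain ⟨C₁, hC₁⟩ := bddAbove_range_norm_inv_natCast_sub t₁
  obtain ⟨C₂, hC₂⟩ := bddAbove_range_norm_inv_natCast_sub t₂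
  have hgeom : Summable fun p : ℕ × ℕ ↦ ‖X‖ ^ p.1 * ‖Y‖ ^ p.2 :=
    (summable_geometric_of_lt_one (norm_nonneg X) hX).mul_of_nonneg
      (summable_geometric_of_lt_one (norm_nonneg Y) hY) (fun _ ↦ by positivity)
      (fun _ ↦ by positivity)
  refine (hgeom.mul_left (C₁ * C₂)).of_norm_bounded fun p ↦ ?_
  have hXp : ‖X‖ ^ (p.1 + 1) ≤ ‖X‖ ^ p.1 :=
    pow_le_pow_of_le_one (norm_nonneg X) hX.le p.1.le_succ
  have hYp : ‖Y‖ ^ (p.2 + 1) ≤ ‖Y‖ ^ p.2 :=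
    pow_le_pow_of_le_one (norm_nonneg Y) hY.le p.2.le_succ
  calc _ = ‖X‖ ^ (p.1 + 1) * ‖Y‖ ^ (p.2 + 1) *
        (‖(((p.1 + 1 : ℕ) : ℂ) - t₁)⁻¹‖ * ‖(((p.1 + p.2 + 2 : ℕ) : ℂ) - t₂)⁻¹‖) := by
        rw [div_eq_mul_inv, mul_inv, norm_mul, norm_mul, norm_mul, norm_pow, norm_pow]
    _ ≤ ‖X‖ ^ p.1 * ‖Y‖ ^ p.2 * (C₁ * C₂) := by
        gcongr
        exacts [(norm_nonneg _).trans (hC₁ ⟨0, rfl⟩), hC₁ ⟨_, rfl⟩, hC₂ ⟨_, rfl⟩]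
    _ = C₁ * C₂ * (‖X‖ ^ p.1 * ‖Y‖ ^ p.2) := mul_comm _ _

theorem injective_succ_mul_sub_one {α : ℕ} (hα : 0 < α) :
    Injective fun m : ℕ ↦ (m + 1) * α - 1 :=
  fun m m' h ↦ Nat.succ_injective <| Nat.eq_of_mul_eq_mul_right hα <|
    Nat.sub_one_cancel (Nat.mul_pos m.succ_pos hα) (Nat.mul_pos m'.succ_pos hα) h

theorem succ_mul_sub_one_add_one {α : ℕ} (hα : 0 < α) (m : ℕ) :
    (m + 1) * α - 1 + 1 = (m + 1) * α :=
  Nat.sub_add_cancel (Nat.mul_pos m.succ_pos hα)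

theorem mem_range_succ_mul_sub_one {α k : ℕ} (hα : 0 < α) :
    k ∈ range (fun m : ℕ ↦ (m + 1) * α - 1) ↔ α ∣ k + 1 := by
  constructor
  · rintro ⟨m, rfl⟩
    rw [succ_mul_sub_one_add_one hα]
    exact dvd_mul_left α _
  · rintro ⟨c, hc⟩
    refine ⟨c - 1, ?_⟩
    have : 0 < c := Nat.pos_of_ne_zero (by rintro rfl; simp at hc)
    simp only [Nat.sub_add_cancel this, mul_comm c, ← hc, Nat.add_sub_cancel]

theorem Complex.sum_map_pow_nthRoots {n : ℕ} (hn : 0 < n) (x : ℂ) (m : ℕ) :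
    ((nthRoots n x).map (· ^ m)).sum = if n ∣ m then (n : ℂ) * x ^ (m / n) else 0 :=
  (Complex.isPrimitiveRoot_exp n hn.ne').sum_map_pow_nthRoots
    (IsAlgClosed.exists_pow_nat_eq x hn).choose_spec m

theorem root_sum_genL_general (α β : ℕ) (hα : 0 < α) (hβ : 0 < β) (x y t₁ t₂ : ℂ)
    (hx : ‖x‖ < 1) (hy : ‖y‖ < 1) :
    ((nthRoots α x).map (fun X =>
      ((nthRoots β y).map (fun Y => genL X Y t₁ t₂)).sum)).sum
    = ∑' p : ℕ × ℕ, (α : ℂ) * (β : ℂ) * x ^ (p.1 + 1) * y ^ (p.2 + 1) /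
        (((((p.1 + 1) * α : ℕ) : ℂ) - t₁) *
          ((((p.1 + 1) * α + (p.2 + 1) * β : ℕ) : ℂ) - t₂)) := by
  unfold genL
  have hsum := Multiset.hasSum_sum_map fun X hX ↦ Multiset.hasSum_sum_map fun Y hY ↦
    (summable_genL_term (norm_lt_one_of_mem_nthRoots hα hx hX)
      (norm_lt_one_of_mem_nthRoots hβ hy hY) t₁ t₂).hasSum
  simp only [Multiset.sum_map_div, Multiset.sum_map_mul_left, Multiset.sum_map_mul_right,
    Complex.sum_map_pow_nthRoots hα, Complex.sum_map_pow_nthRoots hβ] at hsum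
  have hinj := (injective_succ_mul_sub_one hα).prodMap (injective_succ_mul_sub_one hβ)
  rw [← hinj.hasSum_iff] at hsum
  · refine (HasSum.tsum_eq ?_).symm
    convert hsum using 1
    funext q
    have e₁ := succ_mul_sub_one_add_one hα q.1
    have e₂ := succ_mul_sub_one_add_one hβ q.2
    have e₃ : (q.1 + 1) * α - 1 + ((q.2 + 1) * β - 1) + 2 = (q.1 + 1) * α + (q.2 + 1) * β := by
      omega
    simp only [comp_apply, Prod.map_fst, Prod.map_snd, e₁, e₂, e₃, dvd_mul_left, if_true,
      Nat.mul_div_cancel _ hα, Nat.mul_div_cancel _ hβ]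
    ring
  · rintro p hp
    rw [range_prodMap, mem_prod, mem_range_succ_mul_sub_one hα, mem_range_succ_mul_sub_one hβ,
      not_and_or] at hp
    rcases hp with hp | hp <;> simp [hp]

/-- Summing `L(X,Y | t₁,t₂)` over all pairs of roots `X^α = x`, `Y^β = y` gives
`Σ_{m,n>0} αβ x^m y^n / ((mα − t₁)(mα + nβ − t₂))`. -/
theorem root_sum_genL (α β : ℕ) (hα : 0 < α) (hβ : 0 < β) (x y t₁ t₂ : ℂ)
    (hx : ‖x‖ < 1) (hy : ‖y‖ < 1)
    (h1 : ∀ m : ℕ+, (((m : ℕ) * α : ℕ) : ℂ) ≠ t₁)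
    (h2 : ∀ m n : ℕ+, (((m : ℕ) * α + (n : ℕ) * β : ℕ) : ℂ) ≠ t₂) :
    ((nthRoots α x).map (fun X =>
      ((nthRoots β y).map (fun Y => genL X Y t₁ t₂)).sum)).sum
    = ∑' p : ℕ × ℕ, (α : ℂ) * (β : ℂ) * x ^ (p.1 + 1) * y ^ (p.2 + 1) /
        (((((p.1 + 1) * α : ℕ) : ℂ) - t₁) *
          ((((p.1 + 1) * α + (p.2 + 1) * β : ℕ) : ℂ) - t₂)) :=
  root_sum_genL_general α β hα hβ x y t₁ t₂ hx hy
end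

section
/- Let α, β, γ be positive integers with γ = α + β, let t be a complex number avoiding all poles, and let x, y be complex with |x|<1, |y|<1. Then Σ_{m,n>0} [ β x^m y^n / ((m−βt)(mα+nβ)) − β x^m y^{m+n} / ((m−βt)(mα+(m+n)β)) + α x^{m+n} y^m / ((m+αt)((m+n)α+mβ)) ] = (1/(γt)) Σ_{n>0} [ (xy)^n/(n−βt) − (xy)^n/n ] + Σ_{m>n>0} x^m y^n / ((m−βt)(n+αt)). -/
/-!
Split `∑_{m,n ≥ 1} A(m,n)`, `A(m,n) = β xᵐ yⁿ / ((m - βt)(mα + nβ))`, into the parts `n > m`,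
`n = m` and `n < m`. The part `n > m` is the second series. On the diagonal
`A(n,n) = (1/(γt)) (xy)ⁿ (1/(n - βt) - 1/n)`. On `n < m` the part combines with the third series
through `β(n + αt) + α(m - βt) = mα + nβ`. Every series converges absolutely because
`1/(m - z)` is bounded in `m`, even at a pole, where the division returns `0`.
-/

open Filter Function

theorem injective_upper_triangle : Injective fun p : ℕ × ℕ => (p.1, p.1 + p.2 + 1) := by
  intro p q h
  simp only [Prod.mk.injEq] at h
  ext <;> omega

theorem injective_lower_triangle : Injective fun p : ℕ × ℕ => (p.1 + p.2 + 1, p.2) := by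
  intro p q h
  simp only [Prod.mk.injEq] at h
  ext <;> omega

theorem HasSum.add_upper_diag_lower {M : Type*} [AddCommMonoid M] [TopologicalSpace M]
    [ContinuousAdd M] {f : ℕ × ℕ → M} {a b c : M}
    (ha : HasSum (fun p : ℕ × ℕ => f (p.1, p.1 + p.2 + 1)) a) (hb : HasSum (fun n => f (n, n)) b)
    (hc : HasSum (fun p : ℕ × ℕ => f (p.1 + p.2 + 1, p.2)) c) : HasSum f (a + b + c) := by
  replace ha := injective_upper_triangle.hasSum_range_iff.2 ha
  replace hb := diag_injective.hasSum_range_iff.2 hb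
  replace hc := injective_lower_triangle.hasSum_range_iff.2 hc
  set U := Set.range fun p : ℕ × ℕ => (p.1, p.1 + p.2 + 1)
  set D := Set.range fun n : ℕ => (n, n)
  set L := Set.range fun p : ℕ × ℕ => (p.1 + p.2 + 1, p.2)
  have hUD : Disjoint U D := by
    rw [Set.disjoint_left]
    rintro _ ⟨p, rfl⟩ ⟨n, hn⟩
    simp only [Prod.mk.injEq] at hn
    omega
  have hUDL : Disjoint (U ∪ D) L := by
    rw [Set.disjoint_left]
    rintro _ (⟨p, rfl⟩ | ⟨n, rfl⟩) ⟨q, hq⟩ <;> simp only [Prod.mk.injEq] at hq <;> omega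
  have hcover : U ∪ D ∪ L = Set.univ := by
    refine Set.eq_univ_of_forall fun ⟨m, n⟩ => ?_
    rcases lt_trichotomy m n with h | rfl | h
    · exact .inl (.inl ⟨(m, n - m - 1), by ext <;> simp only; omega⟩)
    · exact .inl (.inr ⟨m, rfl⟩)
    · exact .inr ⟨(m - n - 1, n), by ext <;> simp only; omega⟩
  have := (ha.add_disjoint hUD hb).add_disjoint hUDL hc
  rwa [hasSum_subtype_iff_indicator, hcover, Set.indicator_univ] at this

section CompleteGroup

variable {E : Type*} [AddCommGroup E] [UniformSpace E] [IsUniformAddGroup E] [CompleteSpace E]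
  [T2Space E] {f g : ℕ × ℕ → E}

theorem Summable.tsum_eq_upper_add_diag_add_lower (hf : Summable f) :
    ∑' p, f p = ∑' p : ℕ × ℕ, f (p.1, p.1 + p.2 + 1) + ∑' n, f (n, n) +
      ∑' p : ℕ × ℕ, f (p.1 + p.2 + 1, p.2) :=
  (HasSum.add_upper_diag_lower (hf.comp_injective injective_upper_triangle).hasSum
    (hf.comp_injective diag_injective).hasSum
    (hf.comp_injective injective_lower_triangle).hasSum).tsum_eq

theorem Summable.tsum_sub_upper_add_swap_lower (hf : Summable f) (hg : Summable g) :
    ∑' p : ℕ × ℕ, (f p - f (p.1, p.1 + p.2 + 1) + g (p.1 + p.2 + 1, p.1)) =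
      ∑' n, f (n, n) + ∑' p : ℕ × ℕ, (f (p.1 + p.2 + 1, p.2) + g (p.1 + p.2 + 1, p.2)) := by
  have hfU : Summable fun p : ℕ × ℕ => f (p.1, p.1 + p.2 + 1) :=
    hf.comp_injective injective_upper_triangle
  have hfL : Summable fun p : ℕ × ℕ => f (p.1 + p.2 + 1, p.2) :=
    hf.comp_injective injective_lower_triangle
  have hgL : Summable fun p : ℕ × ℕ => g (p.1 + p.2 + 1, p.2) :=
    hg.comp_injective injective_lower_triangle
  have hswap : ∑' p : ℕ × ℕ, g (p.1 + p.2 + 1, p.1) = ∑' p : ℕ × ℕ, g (p.1 + p.2 + 1, p.2) := by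
    rw [← (Equiv.prodComm ℕ ℕ).tsum_eq]
    simp only [Equiv.prodComm_apply, Prod.fst_swap, Prod.snd_swap, add_comm]
  have hgS : Summable fun p : ℕ × ℕ => g (p.1 + p.2 + 1, p.1) := by
    refine hg.comp_injective fun p q h => ?_
    simp only [Prod.mk.injEq] at h
    ext <;> omega
  rw [(hf.sub hfU).tsum_add hgS, hf.tsum_sub hfU, hfL.tsum_add hgL, hswap,
    hf.tsum_eq_upper_add_diag_add_lower]
  abel

end CompleteGroup

theorem bddAbove_range_norm_inv_natCast_sub_s4 (z : ℂ) :
    BddAbove (Set.range fun m : ℕ => ‖((m : ℂ) - z)⁻¹‖) := by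
  have : Tendsto (fun m : ℕ => ‖(m : ℂ) - z‖) atTop atTop := by
    refine tendsto_atTop_mono (fun m => ?_)
      (tendsto_atTop_add_const_right _ (-‖z‖) tendsto_natCast_atTop_atTop)
    simpa [sub_eq_add_neg] using norm_sub_norm_le (m : ℂ) z
  simp_rw [norm_inv]
  exact this.inv_tendsto_atTop.bddAbove_range

theorem summable_of_norm_le_mul_pow {E : Type*} [NormedAddCommGroup E] [CompleteSpace E]
    {f : ℕ × ℕ → E} {x y : ℂ} (hx : ‖x‖ < 1) (hy : ‖y‖ < 1) (K : ℝ)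
    (h : ∀ m n, ‖f (m, n)‖ ≤ K * (‖x‖ ^ m * ‖y‖ ^ n)) : Summable f := by
  have hgeom : Summable fun p : ℕ × ℕ => ‖x‖ ^ p.1 * ‖y‖ ^ p.2 :=
    (summable_geometric_of_lt_one (norm_nonneg x) hx).mul_of_nonneg
      (summable_geometric_of_lt_one (norm_nonneg y) hy)
      (fun _ => by positivity) (fun _ => by positivity)
  exact (hgeom.mul_left K).of_norm_bounded fun p => h p.1 p.2

theorem norm_div_mul_natCast_le (c D : ℂ) (k : ℕ) : ‖c / (D * k)‖ ≤ ‖c‖ * ‖D⁻¹‖ := by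
  rw [div_eq_mul_inv, mul_inv, ← mul_assoc, norm_mul]
  have : ‖(k : ℂ)⁻¹‖ ≤ 1 := by
    rw [norm_inv, Complex.norm_natCast]
    exact Nat.cast_inv_le_one k
  calc ‖c * D⁻¹‖ * ‖(k : ℂ)⁻¹‖ ≤ ‖c * D⁻¹‖ * 1 := by gcongr
    _ = ‖c‖ * ‖D⁻¹‖ := by rw [mul_one, norm_mul]

noncomputable def betaTerm (α β : ℕ) (t x y : ℂ) (m n : ℕ) : ℂ :=
  β * x ^ m * y ^ n / (((m : ℂ) - β * t) * ((m * α + n * β : ℕ) : ℂ))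

noncomputable def alphaTerm (α β : ℕ) (t x y : ℂ) (m n : ℕ) : ℂ :=
  α * x ^ m * y ^ n / (((n : ℂ) + α * t) * ((m * α + n * β : ℕ) : ℂ))

noncomputable def crossTerm (α β : ℕ) (t x y : ℂ) (m n : ℕ) : ℂ :=
  x ^ m * y ^ n / (((m : ℂ) - β * t) * ((n : ℂ) + α * t))

section Summability

variable (α β : ℕ) (t : ℂ) {x y : ℂ}

theorem summable_betaTerm (hx : ‖x‖ < 1) (hy : ‖y‖ < 1) :
    Summable fun p : ℕ × ℕ => betaTerm α β t x y p.1 p.2 := by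
  obtain ⟨B, hB⟩ := bddAbove_range_norm_inv_natCast_sub_s4 (β * t)
  refine summable_of_norm_le_mul_pow hx hy (β * B) fun m n => ?_
  calc ‖betaTerm α β t x y m n‖ ≤ ‖(β : ℂ) * x ^ m * y ^ n‖ * ‖((m : ℂ) - β * t)⁻¹‖ :=
        norm_div_mul_natCast_le _ _ _
    _ ≤ β * ‖x‖ ^ m * ‖y‖ ^ n * B := by
        rw [norm_mul, norm_mul, norm_pow, norm_pow, Complex.norm_natCast]
        gcongr
        exact hB (Set.mem_range_self m)
    _ = β * B * (‖x‖ ^ m * ‖y‖ ^ n) := by ring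

theorem summable_alphaTerm (hx : ‖x‖ < 1) (hy : ‖y‖ < 1) :
    Summable fun p : ℕ × ℕ => alphaTerm α β t x y p.1 p.2 := by
  obtain ⟨B, hB⟩ := bddAbove_range_norm_inv_natCast_sub_s4 (-(α * t))
  refine summable_of_norm_le_mul_pow hx hy (α * B) fun m n => ?_
  calc ‖alphaTerm α β t x y m n‖ ≤ ‖(α : ℂ) * x ^ m * y ^ n‖ * ‖((n : ℂ) + α * t)⁻¹‖ :=
        norm_div_mul_natCast_le _ _ _
    _ ≤ α * ‖x‖ ^ m * ‖y‖ ^ n * B := by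
        rw [norm_mul, norm_mul, norm_pow, norm_pow, Complex.norm_natCast, ← sub_neg_eq_add]
        gcongr
        exact hB (Set.mem_range_self n)
    _ = α * B * (‖x‖ ^ m * ‖y‖ ^ n) := by ring

end Summability

theorem betaTerm_add_alphaTerm {α β m n : ℕ} {t : ℂ} (x y : ℂ) (hm : (m : ℂ) - β * t ≠ 0)
    (hn : (n : ℂ) + α * t ≠ 0) (hmn : m * α + n * β ≠ 0) :
    betaTerm α β t x y m n + alphaTerm α β t x y m n = crossTerm α β t x y m n := by
  have hmn' : ((m * α + n * β : ℕ) : ℂ) ≠ 0 := Nat.cast_ne_zero.2 hmn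
  unfold betaTerm alphaTerm crossTerm
  rw [div_add_div _ _ (mul_ne_zero hm hmn') (mul_ne_zero hn hmn'),
    div_eq_div_iff (mul_ne_zero (mul_ne_zero hm hmn') (mul_ne_zero hn hmn')) (mul_ne_zero hm hn)]
  push_cast
  ring

theorem betaTerm_diag {α β n : ℕ} {t : ℂ} (x y : ℂ) (hαβ : α + β ≠ 0) (hn : n ≠ 0) (ht : t ≠ 0)
    (hnt : (n : ℂ) - β * t ≠ 0) :
    betaTerm α β t x y n n =
      1 / (((α + β : ℕ) : ℂ) * t) * ((x * y) ^ n / ((n : ℂ) - β * t) - (x * y) ^ n / n) := by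
  have hαβ' : ((α + β : ℕ) : ℂ) ≠ 0 := Nat.cast_ne_zero.2 hαβ
  have hn' : (n : ℂ) ≠ 0 := Nat.cast_ne_zero.2 hn
  unfold betaTerm
  rw [show n * α + n * β = n * (α + β) by ring]
  push_cast at hαβ' ⊢
  field_simp
  ring

theorem core_summation_identity_general (α β γ : ℕ) (hα : 0 < α)
    (hγ : γ = α + β) (t : ℂ) (ht : t ≠ 0)
    (h1 : ∀ m : ℕ+, (m : ℂ) ≠ (β : ℂ) * t)
    (h2 : ∀ m : ℕ+, (m : ℂ) ≠ -((α : ℂ) * t))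
    (x y : ℂ) (hx : ‖x‖ < 1) (hy : ‖y‖ < 1) :
    (∑' p : ℕ × ℕ,
      ((β : ℂ) * x ^ (p.1+1) * y ^ (p.2+1) /
          ((((p.1+1 : ℕ) : ℂ) - (β : ℂ) * t) * ((((p.1+1)*α + (p.2+1)*β : ℕ)) : ℂ))
        - (β : ℂ) * x ^ (p.1+1) * y ^ (p.1+p.2+2) /
          ((((p.1+1 : ℕ) : ℂ) - (β : ℂ) * t) * ((((p.1+1)*α + (p.1+p.2+2)*β : ℕ)) : ℂ))
        + (α : ℂ) * x ^ (p.1+p.2+2) * y ^ (p.1+1) /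
          ((((p.1+1 : ℕ) : ℂ) + (α : ℂ) * t) * ((((p.1+p.2+2)*α + (p.1+1)*β : ℕ)) : ℂ))))
    = (1 / ((γ : ℂ) * t)) * (∑' n : ℕ,
        ((x*y) ^ (n+1) / (((n+1 : ℕ) : ℂ) - (β:ℂ)*t) - (x*y) ^ (n+1) / ((n+1 : ℕ) : ℂ)))
      + ∑' p : ℕ × ℕ,
        x ^ (p.1+p.2+2) * y ^ (p.2+1) /
          ((((p.1+p.2+2 : ℕ) : ℂ) - (β:ℂ)*t) * (((p.2+1 : ℕ) : ℂ) + (α:ℂ)*t)) := by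
  subst hγ
  have hβt (m : ℕ) : (m + 1 : ℕ) - β * t ≠ 0 := sub_ne_zero.2 (h1 m.succPNat)
  have hαt (n : ℕ) : (n + 1 : ℕ) + α * t ≠ 0 := fun h =>
    h2 n.succPNat (eq_neg_iff_add_eq_zero.2 h)
  have hshift : Injective (Prod.map Nat.succ Nat.succ) :=
    Nat.succ_injective.prodMap Nat.succ_injective
  have hf := (summable_betaTerm α β t hx hy).comp_injective hshift
  have hg := (summable_alphaTerm α β t hx hy).comp_injective hshift
  -- the left-hand side is this rearrangement's left-hand side, unfolded
  refine (hf.tsum_sub_upper_add_swap_lower hg).trans ?_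
  congr 1
  · rw [← tsum_mul_left]
    exact tsum_congr fun n => betaTerm_diag x y (by omega) n.succ_ne_zero ht (hβt n)
  · exact tsum_congr fun p => betaTerm_add_alphaTerm x y (hβt _) (hαt _)
      (Nat.add_pos_left (Nat.mul_pos (Nat.succ_pos _) hα) _).ne'

/-- The core summation identity: for positive integers `α, β, γ` with
`γ = α + β`, `t ≠ 0` with `βt, −αt` not positive integers, and `|x|,|y| < 1`,
the combination of three double series equals
`(1/(γt)) Σ_{n>0} [(xy)^n/(n−βt) − (xy)^n/n] + Σ_{m>n>0} x^m y^n/((m−βt)(n+αt))`.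
(Throughout, `p : ℕ × ℕ` encodes positive indices via `+1` shifts; in the last
sum `m = p.1+p.2+2 > n = p.2+1 > 0`.) -/
theorem core_summation_identity (α β γ : ℕ) (hα : 0 < α) (hβ : 0 < β)
    (hγ : γ = α + β) (t : ℂ) (ht : t ≠ 0)
    (h1 : ∀ m : ℕ+, (m : ℂ) ≠ (β : ℂ) * t)
    (h2 : ∀ m : ℕ+, (m : ℂ) ≠ -((α : ℂ) * t))
    (x y : ℂ) (hx : ‖x‖ < 1) (hy : ‖y‖ < 1) :
    (∑' p : ℕ × ℕ,
      ((β : ℂ) * x ^ (p.1+1) * y ^ (p.2+1) /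
          ((((p.1+1 : ℕ) : ℂ) - (β : ℂ) * t) * ((((p.1+1)*α + (p.2+1)*β : ℕ)) : ℂ))
        - (β : ℂ) * x ^ (p.1+1) * y ^ (p.1+p.2+2) /
          ((((p.1+1 : ℕ) : ℂ) - (β : ℂ) * t) * ((((p.1+1)*α + (p.1+p.2+2)*β : ℕ)) : ℂ))
        + (α : ℂ) * x ^ (p.1+p.2+2) * y ^ (p.1+1) /
          ((((p.1+1 : ℕ) : ℂ) + (α : ℂ) * t) * ((((p.1+p.2+2)*α + (p.1+1)*β : ℕ)) : ℂ))))
    = (1 / ((γ : ℂ) * t)) * (∑' n : ℕ,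
        ((x*y) ^ (n+1) / (((n+1 : ℕ) : ℂ) - (β:ℂ)*t) - (x*y) ^ (n+1) / ((n+1 : ℕ) : ℂ)))
      + ∑' p : ℕ × ℕ,
        x ^ (p.1+p.2+2) * y ^ (p.2+1) /
          ((((p.1+p.2+2 : ℕ) : ℂ) - (β:ℂ)*t) * (((p.2+1 : ℕ) : ℂ) + (α:ℂ)*t)) :=
  core_summation_identity_general α β γ hα hγ t ht h1 h2 x y hx hy
end

section
/- For complex x, y with |x| < |y| < 1 and complex t_1, t_2 with |t_1| < 1, |t_2| < 2, the double sum Σ_{m,n>0} x^m y^n / ((m−t_1)(m+n−t_2)), expanded as a power series in t_1 and t_2, has the coefficient of t_1^{k−1} t_2^{l−1} equal to Li_{k,l}(x/y, y) = Σ_{0<m<M} (x/y)^m y^M / (m^k M^l). -/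
set_option maxHeartbeats 1000000

private lemma geom_tsum_aux (t c : ℂ) (h : ‖t‖ < ‖c‖) :
    ∑' k : ℕ, t ^ k / c ^ (k + 1) = (c - t)⁻¹ := by
  have hc0 : (0:ℝ) < ‖c‖ := lt_of_le_of_lt (norm_nonneg t) h
  have hc : c ≠ 0 := norm_pos_iff.mp hc0
  have h1 : ‖t / c‖ < 1 := by rw [norm_div]; exact (div_lt_one hc0).2 h
  have key : ∀ k : ℕ, t ^ k / c ^ (k + 1) = (t / c) ^ k * c⁻¹ := by
    intro k
    rw [div_pow, pow_succ]
    field_simp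
  calc ∑' k : ℕ, t ^ k / c ^ (k + 1) = ∑' k : ℕ, (t / c) ^ k * c⁻¹ := tsum_congr key
    _ = (1 - t / c)⁻¹ * c⁻¹ := by rw [tsum_mul_right, tsum_geometric_of_norm_lt_one h1]
    _ = (c - t)⁻¹ := by
        rw [← mul_inv]
        congr 1
        field_simp

/-- Power-series expansion of the generating function:
`L(x,y|t₁,t₂) = Σ_{k,l>0} Li_{k,l}(x/y, y) t₁^{k−1} t₂^{l−1}` for
`|t₁| < 1`, `|t₂| < 2` and `|x| < |y| < 1`. Here
`Li_{k,l}(a,b) = Σ_{0<m<M} a^m b^M/(m^k M^l)` with `m = r.1+1`, `M = r.1+r.2+2`. -/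
theorem genL_power_series (x y t₁ t₂ : ℂ) (hxy : ‖x‖ < ‖y‖) (hy : ‖y‖ < 1)
    (ht₁ : ‖t₁‖ < 1) (ht₂ : ‖t₂‖ < 2) :
    ∑' p : ℕ × ℕ, x ^ (p.1+1) * y ^ (p.2+1) /
        ((((p.1+1:ℕ):ℂ) - t₁) * (((p.1+p.2+2:ℕ):ℂ) - t₂))
    = ∑' q : ℕ × ℕ,
        (∑' r : ℕ × ℕ, (x / y) ^ (r.1+1) * y ^ (r.1+r.2+2) /
            (((r.1+1:ℕ):ℂ) ^ (q.1+1) * ((r.1+r.2+2:ℕ):ℂ) ^ (q.2+1)))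
          * t₁ ^ q.1 * t₂ ^ q.2 := by
  have hx1 : ‖x‖ < 1 := hxy.trans hy
  have hy0 : y ≠ 0 := by
    intro h0
    rw [h0, norm_zero] at hxy
    exact absurd hxy (not_lt.2 (norm_nonneg x))
  set F : (ℕ × ℕ) × (ℕ × ℕ) → ℂ := fun s =>
    x ^ (s.1.1+1) * y ^ (s.1.2+1) * t₁ ^ s.2.1 * t₂ ^ s.2.2 /
      (((s.1.1+1:ℕ):ℂ) ^ (s.2.1+1) * ((s.1.1+s.1.2+2:ℕ):ℂ) ^ (s.2.2+1)) with hFdef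
  -- summability of the 4-fold series
  have hxs : Summable (fun m : ℕ => ‖x‖ ^ (m+1)) := by
    simpa [pow_succ] using (summable_geometric_of_lt_one (norm_nonneg x) hx1).mul_right ‖x‖
  have hys : Summable (fun n : ℕ => ‖y‖ ^ (n+1)) := by
    simpa [pow_succ] using (summable_geometric_of_lt_one (norm_nonneg y) hy).mul_right ‖y‖
  have ht1s : Summable (fun k : ℕ => ‖t₁‖ ^ k) :=
    summable_geometric_of_lt_one (norm_nonneg t₁) ht₁
  have ht2s : Summable (fun l : ℕ => (‖t₂‖ / 2) ^ l) :=
    summable_geometric_of_lt_one (by positivity) (by linarith [(div_lt_one (by norm_num : (0:ℝ) < 2)).2 ht₂])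
  have hg : Summable (fun s : (ℕ × ℕ) × (ℕ × ℕ) =>
      (‖x‖ ^ (s.1.1+1) * ‖y‖ ^ (s.1.2+1)) * (‖t₁‖ ^ s.2.1 * (‖t₂‖ / 2) ^ s.2.2)) := by
    have h1 : Summable (fun p : ℕ × ℕ => ‖x‖ ^ (p.1+1) * ‖y‖ ^ (p.2+1)) :=
      Summable.mul_of_nonneg (f := fun m : ℕ => ‖x‖ ^ (m+1)) (g := fun n : ℕ => ‖y‖ ^ (n+1))
        hxs hys (fun m => by positivity) (fun n => by positivity)
    have h2 : Summable (fun q : ℕ × ℕ => ‖t₁‖ ^ q.1 * (‖t₂‖ / 2) ^ q.2) :=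
      Summable.mul_of_nonneg (f := fun k : ℕ => ‖t₁‖ ^ k) (g := fun l : ℕ => (‖t₂‖ / 2) ^ l)
        ht1s ht2s (fun k => by positivity) (fun l => by positivity)
    exact Summable.mul_of_nonneg (f := fun p : ℕ × ℕ => ‖x‖ ^ (p.1+1) * ‖y‖ ^ (p.2+1))
      (g := fun q : ℕ × ℕ => ‖t₁‖ ^ q.1 * (‖t₂‖ / 2) ^ q.2)
      h1 h2 (fun p => by positivity) (fun q => by positivity)
  have hF : Summable F := by
    apply Summable.of_norm_bounded hg
    rintro ⟨⟨m, n⟩, ⟨k, l⟩⟩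
    have hden : (2:ℝ) ^ l ≤ ((m+1:ℕ):ℝ) ^ (k+1) * ((m+n+2:ℕ):ℝ) ^ (l+1) := by
      have h1 : (1:ℝ) ≤ ((m+1:ℕ):ℝ) ^ (k+1) := one_le_pow₀ (by exact_mod_cast Nat.le_add_left 1 m)
      have h2 : (2:ℝ) ^ (l+1) ≤ ((m+n+2:ℕ):ℝ) ^ (l+1) := by
        apply pow_le_pow_left₀ (by norm_num)
        exact_mod_cast by omega
      have h3 : (2:ℝ) ^ l ≤ (2:ℝ) ^ (l+1) := by
        apply pow_le_pow_right₀ (by norm_num) (Nat.le_succ l)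
      nlinarith [pow_nonneg (by norm_num : (0:ℝ) ≤ 2) l, pow_pos (by norm_num : (0:ℝ) < 2) (l+1)]
    have hnorm : ‖F ((m,n),(k,l))‖ =
        (‖x‖ ^ (m+1) * ‖y‖ ^ (n+1) * ‖t₁‖ ^ k * ‖t₂‖ ^ l) /
          (((m+1:ℕ):ℝ) ^ (k+1) * ((m+n+2:ℕ):ℝ) ^ (l+1)) := by
      simp only [hFdef, norm_div, norm_mul, norm_pow, Complex.norm_natCast]
    rw [hnorm]
    have hrhs : (‖x‖ ^ (m+1) * ‖y‖ ^ (n+1)) * (‖t₁‖ ^ k * (‖t₂‖ / 2) ^ l) =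
        (‖x‖ ^ (m+1) * ‖y‖ ^ (n+1) * ‖t₁‖ ^ k * ‖t₂‖ ^ l) / (2:ℝ) ^ l := by
      rw [div_pow]; ring
    rw [hrhs]
    gcongr
  -- Step A: rewrite LHS
  have stepA : ∑' p : ℕ × ℕ, x ^ (p.1+1) * y ^ (p.2+1) /
        ((((p.1+1:ℕ):ℂ) - t₁) * (((p.1+p.2+2:ℕ):ℂ) - t₂))
      = ∑' p : ℕ × ℕ, ∑' q : ℕ × ℕ, F (p, q) := by
    apply tsum_congr
    rintro ⟨m, n⟩
    set c₁ : ℂ := ((m+1:ℕ):ℂ) with hc₁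
    set c₂ : ℂ := ((m+n+2:ℕ):ℂ) with hc₂
    have hc₁ne : c₁ ≠ 0 := by
      rw [hc₁]; exact_mod_cast Nat.succ_ne_zero m
    have hc₂ne : c₂ ≠ 0 := by
      rw [hc₂]; exact Nat.cast_ne_zero.mpr (by omega)
    have hnt₁ : ‖t₁‖ < ‖c₁‖ := by
      rw [hc₁, Complex.norm_natCast]
      calc ‖t₁‖ < 1 := ht₁
        _ ≤ ((m+1:ℕ):ℝ) := by exact_mod_cast Nat.le_add_left 1 m
    have hnt₂ : ‖t₂‖ < ‖c₂‖ := by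
      rw [hc₂, Complex.norm_natCast]
      calc ‖t₂‖ < 2 := ht₂
        _ ≤ ((m+n+2:ℕ):ℝ) := by exact_mod_cast by omega
    have heq : (fun q : ℕ × ℕ => F ((m,n), q)) =
        fun q : ℕ × ℕ => (x ^ (m+1) * (t₁ ^ q.1 / c₁ ^ (q.1+1))) *
          (y ^ (n+1) * (t₂ ^ q.2 / c₂ ^ (q.2+1))) := by
      funext q
      simp only [hFdef]
      rw [hc₁, hc₂, ← mul_div_assoc, ← mul_div_assoc, div_mul_div_comm]
      congr 1
      ring
    have hq : Summable (fun q : ℕ × ℕ => (x ^ (m+1) * (t₁ ^ q.1 / c₁ ^ (q.1+1))) *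
        (y ^ (n+1) * (t₂ ^ q.2 / c₂ ^ (q.2+1)))) := by
      rw [← heq]; exact hF.prod_factor (m, n)
    calc x ^ (m+1) * y ^ (n+1) / ((c₁ - t₁) * (c₂ - t₂))
        = (x ^ (m+1) * (c₁ - t₁)⁻¹) * (y ^ (n+1) * (c₂ - t₂)⁻¹) := by
          rw [div_eq_mul_inv, mul_inv]; ring
      _ = (x ^ (m+1) * ∑' k : ℕ, t₁ ^ k / c₁ ^ (k+1)) *
            (y ^ (n+1) * ∑' l : ℕ, t₂ ^ l / c₂ ^ (l+1)) := by
          rw [geom_tsum_aux t₁ c₁ hnt₁, geom_tsum_aux t₂ c₂ hnt₂]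
      _ = (∑' k : ℕ, x ^ (m+1) * (t₁ ^ k / c₁ ^ (k+1))) *
            (∑' l : ℕ, y ^ (n+1) * (t₂ ^ l / c₂ ^ (l+1))) := by
          rw [tsum_mul_left, tsum_mul_left]
      _ = ∑' k : ℕ, (x ^ (m+1) * (t₁ ^ k / c₁ ^ (k+1))) *
            (∑' l : ℕ, y ^ (n+1) * (t₂ ^ l / c₂ ^ (l+1))) := by
          rw [tsum_mul_right]
      _ = ∑' k : ℕ, ∑' l : ℕ, (x ^ (m+1) * (t₁ ^ k / c₁ ^ (k+1))) *
            (y ^ (n+1) * (t₂ ^ l / c₂ ^ (l+1))) := by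
          exact tsum_congr fun k => (tsum_mul_left).symm
      _ = ∑' q : ℕ × ℕ, F ((m,n), q) := by
          rw [heq]
          exact (Summable.tsum_prod' hq (fun k => hq.prod_factor k)).symm
  rw [stepA]
  -- Step B: swap
  have stepB : ∑' p : ℕ × ℕ, ∑' q : ℕ × ℕ, F (p, q)
      = ∑' q : ℕ × ℕ, ∑' p : ℕ × ℕ, F (p, q) := by
    exact (Summable.tsum_comm' (f := fun p q : ℕ × ℕ => F (p, q)) hF
      (fun p => hF.prod_factor p)
      (fun q => (hF.prod_symm).prod_factor q)).symm
  rw [stepB]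
  -- Step C: per q
  apply tsum_congr
  rintro ⟨k, l⟩
  have hterm : ∀ p : ℕ × ℕ, F (p, (k, l)) =
      ((x / y) ^ (p.1+1) * y ^ (p.1+p.2+2) /
        (((p.1+1:ℕ):ℂ) ^ (k+1) * ((p.1+p.2+2:ℕ):ℂ) ^ (l+1))) * t₁ ^ k * t₂ ^ l := by
    rintro ⟨m, n⟩
    have hxy2 : (x / y) ^ (m+1) * y ^ (m+n+2) = x ^ (m+1) * y ^ (n+1) := by
      have hy2 : y ^ (m+n+2) = y ^ (m+1) * y ^ (n+1) := by
        rw [← pow_add]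
        congr 1
        omega
      rw [hy2, ← mul_assoc, ← mul_pow, div_mul_cancel₀ x hy0]
    simp only [hFdef]
    rw [hxy2, div_mul_eq_mul_div, div_mul_eq_mul_div]
  calc ∑' p : ℕ × ℕ, F (p, (k, l))
      = ∑' p : ℕ × ℕ, ((x / y) ^ (p.1+1) * y ^ (p.1+p.2+2) /
          (((p.1+1:ℕ):ℂ) ^ (k+1) * ((p.1+p.2+2:ℕ):ℂ) ^ (l+1))) * t₁ ^ k * t₂ ^ l :=
        tsum_congr hterm
    _ = (∑' r : ℕ × ℕ, (x / y) ^ (r.1+1) * y ^ (r.1+r.2+2) /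
          (((r.1+1:ℕ):ℂ) ^ (k+1) * ((r.1+r.2+2:ℕ):ℂ) ^ (l+1))) * t₁ ^ k * t₂ ^ l := by
        rw [← tsum_mul_right, ← tsum_mul_right]
end

section
/- Fix n ≥ 2. The (n−1)×(n−1) matrix A with entries A_{i,k} = (−i)^{k−1} (n−i)^{n−k−1}, for i, k = 1, …, n−1, is invertible over ℚ. -/
/-- The Vandermonde-type matrix `A_{i,k} = (−i)^{k−1} (n−i)^{n−k−1}`,
`i, k = 1, …, n−1`, is invertible over `ℚ`. (Indices `i, k : Fin (n-1)` encode
the values `i.val + 1`, `k.val + 1`.) -/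
theorem vandermonde_type_det_ne_zero (n : ℕ) (hn : 2 ≤ n) :
    (Matrix.of (fun i k : Fin (n-1) =>
      (-((i.val : ℚ) + 1)) ^ k.val *
        ((n : ℚ) - ((i.val : ℚ) + 1)) ^ (n - k.val - 2))).det ≠ 0 := by
  have hd : ∀ i : Fin (n-1), ((n : ℚ) - ((i.val : ℚ) + 1)) ≠ 0 := by
    intro i
    have hi := i.isLt
    have : (i.val : ℚ) + 1 < n := by exact_mod_cast by omega
    linarith
  set x : Fin (n-1) → ℚ := fun i => (-((i.val : ℚ) + 1)) / ((n : ℚ) - ((i.val : ℚ) + 1))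
    with hx
  have hmat : (Matrix.of (fun i k : Fin (n-1) =>
      (-((i.val : ℚ) + 1)) ^ k.val *
        ((n : ℚ) - ((i.val : ℚ) + 1)) ^ (n - k.val - 2)))
      = Matrix.of (fun i k : Fin (n-1) =>
        (fun j : Fin (n-1) => ((n : ℚ) - ((j.val : ℚ) + 1)) ^ (n - 2)) i
          * Matrix.vandermonde x i k) := by
    ext i k
    have hk := k.isLt
    have hsplit : ((n : ℚ) - ((i.val : ℚ) + 1)) ^ (n - 2)
        = ((n : ℚ) - ((i.val : ℚ) + 1)) ^ (n - k.val - 2)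
          * ((n : ℚ) - ((i.val : ℚ) + 1)) ^ k.val := by
      rw [← pow_add]
      congr 1
      omega
    simp only [Matrix.of_apply, Matrix.vandermonde, hx]
    rw [div_pow, hsplit, mul_assoc, mul_div_assoc',
      mul_div_cancel_left₀ _ (pow_ne_zero _ (hd i)), mul_comm]
  rw [hmat, Matrix.det_mul_column]
  refine mul_ne_zero (Finset.prod_ne_zero_iff.2 fun i _ => pow_ne_zero _ (hd i)) ?_
  rw [Matrix.det_vandermonde_ne_zero_iff]
  intro i j hij
  have hdi := hd i
  have hdj := hd j
  rw [hx] at hij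
  simp only [div_eq_div_iff hdi hdj] at hij
  have hn0 : (n : ℚ) ≠ 0 := by positivity
  have : ((i.val : ℚ) + 1) * n = ((j.val : ℚ) + 1) * n := by ring_nf at hij ⊢; linarith
  have : ((i.val : ℚ) + 1) = ((j.val : ℚ) + 1) := mul_right_cancel₀ hn0 this
  have : (i.val : ℚ) = j.val := by linarith
  exact Fin.ext (by exact_mod_cast this)
end

section
/- Let n ≥ 2 and for each pair of positive integers (α,β) with α+β = n define the vector v^{α,β} ∈ ℚ^{n−1} with entries v^{α,β}_k = (−α)^{k−1} β^{n−k−1} for k = 1,…,n−1. Then the vectors v^{1,n−1}, v^{2,n−2}, …, v^{n−1,1} form a basis of ℚ^{n−1}. -/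
/-- The vectors `v^{α,n−α} ∈ ℚ^{n−1}` with entries
`v^{α,β}_k = (−α)^{k−1} β^{n−k−1}` (`β = n−α`, `α = 1,…,n−1`, `k = 1,…,n−1`)
form a basis of `ℚ^{n−1}`: they are linearly independent and span. -/
theorem depth_two_vectors_basis (n : ℕ) (hn : 2 ≤ n) :
    LinearIndependent ℚ (fun a : Fin (n-1) => fun k : Fin (n-1) =>
        (-((a.val : ℚ) + 1)) ^ k.val *
          ((n : ℚ) - ((a.val : ℚ) + 1)) ^ (n - k.val - 2)) ∧
    Submodule.span ℚ (Set.range (fun a : Fin (n-1) => fun k : Fin (n-1) =>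
        (-((a.val : ℚ) + 1)) ^ k.val *
          ((n : ℚ) - ((a.val : ℚ) + 1)) ^ (n - k.val - 2))) = ⊤ := by
  set f : Fin (n-1) → Fin (n-1) → ℚ := fun a k =>
      (-((a.val : ℚ) + 1)) ^ k.val *
        ((n : ℚ) - ((a.val : ℚ) + 1)) ^ (n - k.val - 2) with hf
  -- β a ≠ 0
  have hβpos : ∀ a : Fin (n-1), (0:ℚ) < (n : ℚ) - ((a.val : ℚ) + 1) := by
    intro a
    have := a.isLt
    have h1 : (a.val : ℚ) + 1 < (n : ℚ) := by
      have : a.val + 1 < n := by omega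
      exact_mod_cast this
    linarith
  have hβ : ∀ a : Fin (n-1), ((n : ℚ) - ((a.val : ℚ) + 1)) ≠ 0 :=
    fun a => ne_of_gt (hβpos a)
  set r : Fin (n-1) → ℚ := fun a =>
      (-((a.val : ℚ) + 1)) / ((n : ℚ) - ((a.val : ℚ) + 1)) with hr
  -- r is injective
  have hrinj : Function.Injective r := by
    intro a b hab
    have h := div_eq_div_iff (hβ a) (hβ b) |>.mp hab
    have ha : (a.val : ℚ) = (b.val : ℚ) := by
      have hn2 : (0:ℚ) < (n:ℚ) := by positivity
      nlinarith [h]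
    exact Fin.ext (by exact_mod_cast ha)
  -- the matrix
  have key : f = fun a k =>
      ((n : ℚ) - ((a.val : ℚ) + 1)) ^ (n-2) * (Matrix.vandermonde r) a k := by
    funext a k
    have hk : k.val ≤ n - 2 := by have := k.isLt; omega
    have h1 : n - k.val - 2 = (n-2) - k.val := by omega
    simp only [Matrix.vandermonde, Matrix.of_apply, hr, div_pow, hf, h1,
      pow_sub₀ _ (hβ a) hk]
    field_simp
  have hdet : (Matrix.of f).det ≠ 0 := by
    have : Matrix.of f =
        Matrix.of (fun a k => ((n : ℚ) - ((a.val : ℚ) + 1)) ^ (n-2) *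
          (Matrix.vandermonde r) a k) := by
      ext a k; rw [key]
    rw [this, Matrix.det_mul_column]
    apply mul_ne_zero
    · exact Finset.prod_ne_zero_iff.mpr fun a _ => pow_ne_zero _ (hβ a)
    · exact Matrix.det_vandermonde_ne_zero_iff.mpr hrinj
  have hli : LinearIndependent ℚ f := by
    have := Matrix.linearIndependent_rows_iff_isUnit.mpr
      ((Matrix.isUnit_iff_isUnit_det (Matrix.of f)).mpr (isUnit_iff_ne_zero.mpr hdet))
    exact this
  refine ⟨hli, ?_⟩
  have : Nonempty (Fin (n-1)) := ⟨⟨0, by omega⟩⟩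
  apply hli.span_eq_top_of_card_eq_finrank
  simp [Module.finrank_fintype_fun_eq_card]
end

section
/- Let n ≥ 2 and let U_n^{α,β}(x,y) := Σ_{k+l=n, k,l>0} Li_{k,l}(y,x) (−α)^{k−1} β^{l−1} for positive integers α, β. Then for each pair (k,l) with k+l = n, k,l ≥ 1, there exist rational numbers c_{α} (α = 1,…,n−1) such that Li_{k,l}(y,x) = Σ_{α=1}^{n−1} c_α U_n^{α, n−α}(x,y), as an identity of absolutely convergent double series for |x|, |y| in the domain of convergence. -/
/-- Double polylogarithm `Li_{k,l}(a,b) = Σ_{0<m₁<m₂} a^{m₁} b^{m₂}/(m₁^k m₂^l)`,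
with `m₁ = p.1+1`, `m₂ = p.1+p.2+2`. -/
noncomputable def Li2 (k l : ℕ) (a b : ℂ) : ℂ :=
  ∑' p : ℕ × ℕ, a ^ (p.1+1) * b ^ (p.1+p.2+2) /
    (((p.1+1 : ℕ) : ℂ) ^ k * ((p.1+p.2+2 : ℕ) : ℂ) ^ l)

/-- Each `Li_{k,l}(y,x)` with `k+l = n` is a rational linear combination of the
combinations `U_n^{α,n−α}(x,y) = Σ_{k'+l'=n} Li_{k',l'}(y,x)(−α)^{k'−1}(n−α)^{l'−1}`
for `α = 1,…,n−1` (here `α = a.val+1`, `k' = j.val+1`). -/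
theorem li_as_combination_of_U (n : ℕ) (hn : 2 ≤ n) (x y : ℂ)
    (hx : ‖x‖ < 1) (hy : ‖y‖ < 1)
    (k l : ℕ) (hk : 1 ≤ k) (hl : 1 ≤ l) (hkl : k + l = n) :
    ∃ c : Fin (n-1) → ℚ,
      Li2 k l y x = ∑ a : Fin (n-1), (c a : ℂ) *
        ∑ j : Fin (n-1),
          Li2 (j.val+1) (n - (j.val+1)) y x *
            (-(((a.val+1 : ℕ)) : ℂ)) ^ j.val *
            (((n - (a.val+1) : ℕ)) : ℂ) ^ (n - j.val - 2) := by
  set m := n - 1 with hmdef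
  have hm1 : 1 ≤ m := by omega
  set Mq : Matrix (Fin m) (Fin m) ℚ := Matrix.of fun a j =>
    (-((a.val+1 : ℕ) : ℚ)) ^ j.val * (((n - (a.val+1) : ℕ)) : ℚ) ^ (n - j.val - 2) with hMq
  set r : Fin m → ℚ := fun a => -((a.val+1 : ℕ) : ℚ) / (((n - (a.val+1) : ℕ)) : ℚ) with hr
  have hBpos : ∀ a : Fin m, (0:ℚ) < (((n - (a.val+1) : ℕ)) : ℚ) := by
    intro a
    have : 0 < n - (a.val + 1) := by omega
    exact_mod_cast this
  have hrinj : Function.Injective r := by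
    intro i j h
    have hBi := hBpos i
    have hBj := hBpos j
    have hci : (((n - (i.val+1) : ℕ)) : ℚ) = (n:ℚ) - (i.val+1) := by
      push_cast [Nat.cast_sub (by omega : i.val + 1 ≤ n)]; ring
    have hcj : (((n - (j.val+1) : ℕ)) : ℚ) = (n:ℚ) - (j.val+1) := by
      push_cast [Nat.cast_sub (by omega : j.val + 1 ≤ n)]; ring
    rw [hr] at h
    simp only at h
    rw [div_eq_div_iff (ne_of_gt hBi) (ne_of_gt hBj)] at h
    rw [hci, hcj] at h
    push_cast at h
    have hn0 : (0:ℚ) < n := by exact_mod_cast (by omega : 0 < n)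
    have h2 : (i.val : ℚ) * n = (j.val : ℚ) * n := by linear_combination -h
    have : (i.val : ℚ) = j.val := mul_right_cancel₀ (ne_of_gt hn0) h2
    exact Fin.ext (by exact_mod_cast this)
  have hfac : Mq = Matrix.diagonal (fun a : Fin m => (((n - (a.val+1) : ℕ)) : ℚ) ^ (m - 1)) *
      Matrix.vandermonde r := by
    ext a j
    have hB := hBpos a
    have hBne := ne_of_gt hB
    simp only [Matrix.diagonal_mul, Matrix.vandermonde, hMq, Matrix.of_apply, hr]
    have hj := j.isLt
    rw [div_pow, mul_div_assoc', eq_div_iff (pow_ne_zero _ hBne)]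
    rw [mul_assoc, ← pow_add, mul_comm]
    congr 2
    omega
  have hdet : Mq.det ≠ 0 := by
    rw [hfac, Matrix.det_mul, Matrix.det_diagonal, Matrix.det_vandermonde]
    apply mul_ne_zero
    · exact Finset.prod_ne_zero_iff.2 fun a _ => pow_ne_zero _ (ne_of_gt (hBpos a))
    · refine Finset.prod_ne_zero_iff.2 fun i _ => Finset.prod_ne_zero_iff.2 fun j hj => ?_
      have hij : i ≠ j := by
        intro h; subst h; simp [Finset.mem_Ioi] at hj
      exact sub_ne_zero.2 fun h => hij (hrinj h.symm)
  have hku : IsUnit Mq.det := isUnit_iff_ne_zero.2 hdet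
  have hinv : Mq⁻¹ * Mq = 1 := Matrix.nonsing_inv_mul Mq hku
  have hk0 : k - 1 < m := by omega
  set k₀ : Fin m := ⟨k-1, hk0⟩ with hk₀
  refine ⟨fun a => Mq⁻¹ k₀ a, ?_⟩
  have hMc : ∀ a j : Fin m, ((Mq a j : ℚ) : ℂ) =
      (-(((a.val+1 : ℕ)) : ℂ)) ^ j.val * (((n - (a.val+1) : ℕ)) : ℂ) ^ (n - j.val - 2) := by
    intro a j
    simp only [hMq, Matrix.of_apply]
    push_cast
    ring
  symm
  calc ∑ a : Fin m, ((Mq⁻¹ k₀ a : ℚ) : ℂ) *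
        ∑ j : Fin m, Li2 (j.val+1) (n - (j.val+1)) y x *
          (-(((a.val+1 : ℕ)) : ℂ)) ^ j.val * (((n - (a.val+1) : ℕ)) : ℂ) ^ (n - j.val - 2)
      = ∑ a : Fin m, ∑ j : Fin m, Li2 (j.val+1) (n - (j.val+1)) y x *
          ((Mq⁻¹ k₀ a * Mq a j : ℚ) : ℂ) := by
        refine Finset.sum_congr rfl fun a _ => ?_
        rw [Finset.mul_sum]
        refine Finset.sum_congr rfl fun j _ => ?_
        rw [Rat.cast_mul, hMc a j]
        ring
    _ = ∑ j : Fin m, Li2 (j.val+1) (n - (j.val+1)) y x *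
          (((Mq⁻¹ * Mq) k₀ j : ℚ) : ℂ) := by
        rw [Finset.sum_comm]
        refine Finset.sum_congr rfl fun j _ => ?_
        rw [Matrix.mul_apply]
        push_cast
        rw [Finset.mul_sum]
    _ = Li2 k l y x := by
        rw [hinv]
        have hone : ∀ j : Fin m, (((1 : Matrix (Fin m) (Fin m) ℚ) k₀ j : ℚ) : ℂ) =
            if k₀ = j then 1 else 0 := by
          intro j; rw [Matrix.one_apply]; split <;> simp
        simp only [hone, mul_ite, mul_one, mul_zero]
        rw [Finset.sum_ite_eq]
        simp only [Finset.mem_univ, if_true]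
        have h1 : k₀.val + 1 = k := by
          show (k - 1) + 1 = k
          omega
        rw [h1]
        congr 1
        omega
end
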